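/- arXiv:1910.01395 — 2 statements merged into one kernel-verified Lean document; each statement's English description precedes it below -/
import Mathlib

section
/- If G is a solution of Gauß' hypergeometric ODE z(1-z)G'' + (c - (a+b+1)z)G' - abG = 0, then the function F(x₁,x₂,x₃,x₄) = x₁^{c-1} x₂^{-a} x₃^{-b} G(x₁x₄/(x₂x₃)) satisfies the PDE ∂₂∂₃F = ∂₁∂₄F on the open region where x₁,x₂,x₃,x₄ > 0. -/
lemma aux_comp_div (G : ℝ → ℝ) (hG : Differentiable ℝ G) (k t : ℝ) (ht : t ≠ 0) :
    HasDerivAt (fun s => G (k / s)) (deriv G (k / t) * (-(k / t ^ 2))) t := by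
  have h1 : HasDerivAt (fun s : ℝ => k / s) (-(k / t ^ 2)) t := by
    simpa [div_eq_mul_inv] using (hasDerivAt_inv ht).const_mul k
  exact ((hG (k / t)).hasDerivAt).comp t h1

lemma aux_rpow (p t : ℝ) (ht : t ≠ 0) : HasDerivAt (fun s : ℝ => s ^ p) (p * t ^ (p - 1)) t :=
  Real.hasDerivAt_rpow_const (Or.inl ht)

lemma aux_comp_mul (G : ℝ → ℝ) (hG : Differentiable ℝ G) (r t : ℝ) :
    HasDerivAt (fun s => G (r * s)) (deriv G (r * t) * r) t := by
  have h1 : HasDerivAt (fun s : ℝ => r * s) r t := by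
    simpa using (hasDerivAt_id t).const_mul r
  exact ((hG (r * t)).hasDerivAt).comp t h1

/-- If `G` solves Gauß' hypergeometric ODE
`z(1-z)G'' + (c-(a+b+1)z)G' - abG = 0`, then
`F(x₁,x₂,x₃,x₄) = x₁^{c-1} x₂^{-a} x₃^{-b} G(x₁x₄/(x₂x₃))` satisfies
`∂₂∂₃F = ∂₁∂₄F` where all coordinates are positive. -/
theorem gkz_from_gauss (a b c : ℝ) (G : ℝ → ℝ) (hG : ContDiff ℝ 2 G)
    (hODE : ∀ z : ℝ,
      z * (1 - z) * deriv (deriv G) z + (c - (a + b + 1) * z) * deriv G z - a * b * G z = 0)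
    (F : ℝ → ℝ → ℝ → ℝ → ℝ)
    (hF : ∀ x1 x2 x3 x4 : ℝ,
      F x1 x2 x3 x4 = x1 ^ (c - 1) * x2 ^ (-a) * x3 ^ (-b) * G (x1 * x4 / (x2 * x3))) :
    ∀ x1 x2 x3 x4 : ℝ, 0 < x1 → 0 < x2 → 0 < x3 → 0 < x4 →
      deriv (fun t2 => deriv (fun t3 => F x1 t2 t3 x4) x3) x2 =
        deriv (fun t1 => deriv (fun t4 => F t1 x2 x3 t4) x4) x1 := by
  intro x1 x2 x3 x4 h1 h2 h3 h4
  have hx1 : x1 ≠ 0 := ne_of_gt h1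
  have hx2 : x2 ≠ 0 := ne_of_gt h2
  have hx3 : x3 ≠ 0 := ne_of_gt h3
  have hG1 : Differentiable ℝ G := hG.differentiable (by norm_num)
  have hG2 : Differentiable ℝ (deriv G) :=
    (((contDiff_succ_iff_deriv (n := 1)).mp (by norm_num at hG ⊢; exact hG)).2.2).differentiable one_ne_zero
  -- inner derivative in x3
  have hinner3 : ∀ t2 : ℝ, t2 ≠ 0 →
      deriv (fun t3 => F x1 t2 t3 x4) x3 =
        x1 ^ (c - 1) * (t2 ^ (-a) *
          ((-b * x3 ^ (-b - 1)) * G ((x1 * x4 / x3) / t2) +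
           x3 ^ (-b) * (deriv G ((x1 * x4 / x3) / t2) * (-((x1 * x4 / x3 ^ 2) / t2))))) := by
    intro t2 ht2
    have hfun : (fun t3 => F x1 t2 t3 x4) =
        fun t3 => (x1 ^ (c - 1) * t2 ^ (-a)) * (t3 ^ (-b) * G ((x1 * x4 / t2) / t3)) := by
      funext t
      rw [hF, show x1 * x4 / (t2 * t) = (x1 * x4 / t2) / t from by ring]
      ring
    rw [hfun]
    have hD := ((aux_rpow (-b) x3 hx3).fun_mul
        (aux_comp_div G hG1 (x1 * x4 / t2) x3 hx3)).const_mul (x1 ^ (c - 1) * t2 ^ (-a))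
    rw [hD.deriv]
    rw [show (x1 * x4 / t2) / x3 = (x1 * x4 / x3) / t2 from by ring]
    ring
  -- the eventual form of the inner derivative near x2
  have hev : (fun t2 => deriv (fun t3 => F x1 t2 t3 x4) x3) =ᶠ[nhds x2]
      (fun t2 => x1 ^ (c - 1) * (t2 ^ (-a) *
          ((-b * x3 ^ (-b - 1)) * G ((x1 * x4 / x3) / t2) +
           x3 ^ (-b) * (deriv G ((x1 * x4 / x3) / t2) * (-((x1 * x4 / x3 ^ 2) / t2)))))) := by
    filter_upwards [eventually_ne_nhds hx2] with t2 ht2 using hinner3 t2 ht2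
  rw [hev.deriv_eq]
  -- compute the LHS derivative
  have hneg : HasDerivAt (fun t2 : ℝ => -((x1 * x4 / x3 ^ 2) / t2))
      (-(-((x1 * x4 / x3 ^ 2) / x2 ^ 2))) x2 := by
    have : HasDerivAt (fun s : ℝ => (x1 * x4 / x3 ^ 2) / s)
        (-((x1 * x4 / x3 ^ 2) / x2 ^ 2)) x2 := by
      generalize x1 * x4 / x3 ^ 2 = k
      simpa [div_eq_mul_inv] using (hasDerivAt_inv hx2).const_mul k
    exact this.neg
  have hL := (((aux_rpow (-a) x2 hx2).fun_mul
      (((aux_comp_div G hG1 (x1 * x4 / x3) x2 hx2).const_mul (-b * x3 ^ (-b - 1))).fun_add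
        (((aux_comp_div (deriv G) hG2 (x1 * x4 / x3) x2 hx2).fun_mul hneg).const_mul
          (x3 ^ (-b)))))).const_mul (x1 ^ (c - 1))
  rw [hL.deriv]
  -- inner derivative in x4
  have hinner4 : ∀ t1 : ℝ,
      deriv (fun t4 => F t1 x2 x3 t4) x4 =
        (x2 ^ (-a) * x3 ^ (-b) / (x2 * x3)) *
          (t1 ^ (c - 1) * (deriv G ((x4 / (x2 * x3)) * t1) * t1)) := by
    intro t1
    have hfun : (fun t4 => F t1 x2 x3 t4) =
        fun t4 => (t1 ^ (c - 1) * x2 ^ (-a) * x3 ^ (-b)) * G ((t1 / (x2 * x3)) * t4) := by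
      funext t
      rw [hF, show t1 * t / (x2 * x3) = (t1 / (x2 * x3)) * t from by ring]
    rw [hfun]
    have hD := (aux_comp_mul G hG1 (t1 / (x2 * x3)) x4).const_mul
        (t1 ^ (c - 1) * x2 ^ (-a) * x3 ^ (-b))
    rw [hD.deriv]
    rw [show (t1 / (x2 * x3)) * x4 = (x4 / (x2 * x3)) * t1 from by ring]
    field_simp
  have hfun2 : (fun t1 => deriv (fun t4 => F t1 x2 x3 t4) x4) =
      fun t1 => (x2 ^ (-a) * x3 ^ (-b) / (x2 * x3)) *
          (t1 ^ (c - 1) * (deriv G ((x4 / (x2 * x3)) * t1) * t1)) := funext hinner4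
  rw [hfun2]
  have hR := (((aux_rpow (c - 1) x1 hx1).fun_mul
      ((aux_comp_mul (deriv G) hG2 (x4 / (x2 * x3)) x1).fun_mul (hasDerivAt_id x1))).const_mul
        (x2 ^ (-a) * x3 ^ (-b) / (x2 * x3)))
  simp only [id_eq] at hR
  rw [hR.deriv]
  -- now a pure computation
  rw [show (x1 * x4 / x3) / x2 = x1 * x4 / (x2 * x3) from by ring,
      show (x4 / (x2 * x3)) * x1 = x1 * x4 / (x2 * x3) from by ring,
      show c - 1 - 1 = (c - 1) + (-1) from by ring,
      show -a - 1 = -a + (-1) from by ring,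
      show -b - 1 = -b + (-1) from by ring,
      Real.rpow_add h1, Real.rpow_add h2, Real.rpow_add h3]
  simp only [Real.rpow_neg_one]
  have key := hODE (x1 * x4 / (x2 * x3))
  have hinv : x1 * x1⁻¹ = 1 := mul_inv_cancel₀ hx1
  linear_combination (-(x1 ^ (c - 1) * x2 ^ (-a) * x3 ^ (-b)) / (x2 * x3)) * key +
    (-(c - 1) * (x1 ^ (c - 1) * x2 ^ (-a) * x3 ^ (-b) * deriv G (x1 * x4 / (x2 * x3)) / (x2 * x3))) * hinv
end

section
/- With the same hypotheses (f satisfies a linear ODE of order n and g of order m, both with rational function coefficients), the product f·g satisfies a linear ODE of order at most n·m with rational function coefficients. -/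
/-- `f` satisfies a nonzero linear ODE of order at most `n` with polynomial (equivalently,
after clearing denominators, rational function) coefficients on the set `s`. -/
def SatisfiesLinearODE (f : ℝ → ℂ) (n : ℕ) (s : Set ℝ) : Prop :=
  ∃ p : Fin (n + 1) → Polynomial ℂ, (∃ i, p i ≠ 0) ∧
    ∀ x ∈ s, ∑ i : Fin (n + 1), (p i).eval (x : ℂ) * iteratedDeriv i f x = 0

open Polynomial Finset

noncomputable section
variable {s : Set ℝ}

def InSpan (s : Set ℝ) (P : Polynomial ℂ) {ι : Type} [Fintype ι]
    (φ : ι → ℝ → ℂ) (F : ℝ → ℂ) : Prop :=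
  ∃ (e : ℕ) (c : ι → Polynomial ℂ), ∀ x ∈ s,
    (P ^ e).eval (x : ℂ) * F x = ∑ i, (c i).eval (x : ℂ) * φ i x

variable {P Q : Polynomial ℂ} {ι κ : Type} [Fintype ι] [Fintype κ]
  {φ : ι → ℝ → ℂ} {ψ : κ → ℝ → ℂ}

private theorem pull (t : Finset ι) (C : ℂ) (a b : ι → ℂ) :
    ∑ i ∈ t, C * a i * b i = C * ∑ i ∈ t, a i * b i := by
  rw [Finset.mul_sum]; exact sum_congr rfl fun i _ => by ring

theorem inSpan_congr {F G : ℝ → ℂ} (h : Set.EqOn F G s) (hF : InSpan s P φ F) :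
    InSpan s P φ G := by
  obtain ⟨e, c, hc⟩ := hF
  exact ⟨e, c, fun x hx => by rw [← h hx]; exact hc x hx⟩

theorem inSpan_base (i : ι) : InSpan s P φ (φ i) := by
  classical
  refine ⟨0, fun j => if j = i then 1 else 0, fun x hx => ?_⟩
  simp [apply_ite (Polynomial.eval (x:ℂ)), ite_mul, Finset.sum_ite_eq']

theorem inSpan_zero : InSpan s P φ (fun _ => 0) :=
  ⟨0, fun _ => 0, fun x hx => by simp⟩

theorem inSpan_add {F G : ℝ → ℂ} (hF : InSpan s P φ F) (hG : InSpan s P φ G) :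
    InSpan s P φ (fun x => F x + G x) := by
  obtain ⟨e₁, c₁, hc₁⟩ := hF
  obtain ⟨e₂, c₂, hc₂⟩ := hG
  refine ⟨e₁ + e₂, fun i => P ^ e₂ * c₁ i + P ^ e₁ * c₂ i, fun x hx => ?_⟩
  have h1 := hc₁ x hx
  have h2 := hc₂ x hx
  simp only [eval_pow] at h1 h2
  simp only [pow_add, eval_pow, eval_mul, eval_add, add_mul, Finset.sum_add_distrib]
  rw [pull, pull]
  linear_combination (eval (↑x) P)^e₂ * h1 + (eval (↑x) P)^e₁ * h2

theorem inSpan_smul (q : Polynomial ℂ) {F : ℝ → ℂ} (hF : InSpan s P φ F) :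
    InSpan s P φ (fun x => q.eval (x:ℂ) * F x) := by
  obtain ⟨e, c, hc⟩ := hF
  refine ⟨e, fun i => q * c i, fun x hx => ?_⟩
  have h1 := hc x hx
  simp only [eval_pow] at h1
  simp only [eval_pow, eval_mul]
  rw [pull]
  linear_combination eval (↑x) q * h1

theorem inSpan_sub {F G : ℝ → ℂ} (hF : InSpan s P φ F) (hG : InSpan s P φ G) :
    InSpan s P φ (fun x => F x - G x) := by
  have := inSpan_add hF (inSpan_smul (-1 : Polynomial ℂ) hG)
  refine inSpan_congr (fun x _ => ?_) this
  simp [sub_eq_add_neg]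

theorem inSpan_sum {α : Type} (t : Finset α) (h : α → ℝ → ℂ)
    (hh : ∀ a ∈ t, InSpan s P φ (h a)) : InSpan s P φ (fun x => ∑ a ∈ t, h a x) := by
  classical
  induction t using Finset.cons_induction with
  | empty => exact inSpan_congr (fun x _ => by simp) inSpan_zero
  | cons a t' ha ih =>
    have : InSpan s P φ (fun x => h a x + ∑ b ∈ t', h b x) :=
      inSpan_add (hh a (Finset.mem_cons_self a t'))
        (ih fun b hb => hh b (Finset.mem_cons_of_mem hb))
    exact inSpan_congr (fun x _ => by rw [Finset.sum_cons]) this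

theorem inSpan_pow_mul {q : ℕ} {F G : ℝ → ℂ} (hFG : ∀ x ∈ s, (P ^ q).eval (x:ℂ) * F x = G x)
    (hG : InSpan s P φ G) : InSpan s P φ F := by
  obtain ⟨e, c, hc⟩ := hG
  refine ⟨q + e, c, fun x hx => ?_⟩
  have h1 := hFG x hx
  have h2 := hc x hx
  simp only [eval_pow] at h1 h2
  simp only [pow_add, eval_pow, eval_mul]
  linear_combination (eval (↑x) P)^e * h1 + h2

theorem inSpan_mul {F G : ℝ → ℂ} (hF : InSpan s P φ F) (hG : InSpan s Q ψ G) :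
    InSpan s (P * Q) (fun p : ι × κ => fun x => φ p.1 x * ψ p.2 x)
      (fun x => F x * G x) := by
  obtain ⟨e₁, c₁, hc₁⟩ := hF
  obtain ⟨e₂, c₂, hc₂⟩ := hG
  refine ⟨e₁ + e₂, fun p => P ^ e₂ * Q ^ e₁ * c₁ p.1 * c₂ p.2, fun x hx => ?_⟩
  have h1 := hc₁ x hx
  have h2 := hc₂ x hx
  simp only [eval_pow] at h1 h2
  rw [Fintype.sum_prod_type]
  simp only [eval_pow, eval_mul, mul_pow, pow_add]
  have key : (∑ i : ι, ∑ j : κ, eval (↑x) P ^ e₂ * eval (↑x) Q ^ e₁ * eval (↑x) (c₁ i)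
        * eval (↑x) (c₂ j) * (φ i x * ψ j x))
      = eval (↑x) P ^ e₂ * eval (↑x) Q ^ e₁ *
        ((∑ i : ι, eval (↑x) (c₁ i) * φ i x) * (∑ j : κ, eval (↑x) (c₂ j) * ψ j x)) := by
    rw [Finset.sum_mul_sum, Finset.mul_sum]
    refine sum_congr rfl fun i _ => ?_
    rw [Finset.mul_sum]
    exact sum_congr rfl fun j _ => by ring
  rw [key, ← h1, ← h2]
  ring
theorem diffAt_iter (hs : IsOpen s) {f : ℝ → ℂ} (hf : ContDiffOn ℝ (⊤ : ℕ∞) f s) (k : ℕ)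
    {x : ℝ} (hx : x ∈ s) : DifferentiableAt ℝ (iteratedDeriv k f) x := by
  have heq : Set.EqOn (iteratedDerivWithin k f s) (iteratedDeriv k f) s := fun y hy => by
    simp only [iteratedDerivWithin, iteratedDeriv, iteratedFDerivWithin_of_isOpen k hs hy]
  have hd : DifferentiableWithinAt ℝ (iteratedDerivWithin k f s) s x :=
    hf.differentiableOn_iteratedDerivWithin (by exact_mod_cast ENat.coe_lt_top k) hs.uniqueDiffOn x hx
  have h2 : DifferentiableAt ℝ (iteratedDerivWithin k f s) x :=
    hd.differentiableAt (hs.mem_nhds hx)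
  exact (Filter.eventuallyEq_of_mem (hs.mem_nhds hx) heq).differentiableAt_iff.mp h2

theorem inSpan_deriv (hs : IsOpen s) {F : ℝ → ℂ}
    (hφd : ∀ i, ∀ x ∈ s, DifferentiableAt ℝ (φ i) x)
    (hφ' : ∀ i, InSpan s P φ (deriv (φ i)))
    (hFd : ∀ x ∈ s, DifferentiableAt ℝ F x)
    (hF : InSpan s P φ F) : InSpan s P φ (deriv F) := by
  obtain ⟨e, c, hc⟩ := hF
  have key : ∀ x ∈ s, (P^e).eval (x:ℂ) * deriv F x
      = (∑ i, ((c i).derivative.eval (x:ℂ) * φ i x + (c i).eval (x:ℂ) * deriv (φ i) x))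
        - (P^e).derivative.eval (x:ℂ) * F x := by
    intro x hx
    have hH0 : ∀ y ∈ s,
        (fun y : ℝ => (P^e).eval (y:ℂ) * F y - ∑ i, (c i).eval (y:ℂ) * φ i y) y = 0 :=
      fun y hy => sub_eq_zero.mpr (hc y hy)
    have hHd : HasDerivAt (fun y : ℝ => (P^e).eval (y:ℂ) * F y - ∑ i, (c i).eval (y:ℂ) * φ i y)
        (((P^e).derivative.eval (x:ℂ) * F x + (P^e).eval (x:ℂ) * deriv F x)
          - ∑ i, ((c i).derivative.eval (x:ℂ) * φ i x + (c i).eval (x:ℂ) * deriv (φ i) x)) x := by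
      apply HasDerivAt.sub
      · exact (((P^e).hasDerivAt (x:ℂ)).comp_ofReal).mul ((hFd x hx).hasDerivAt)
      · exact HasDerivAt.fun_sum fun i _ =>
          (((c i).hasDerivAt (x:ℂ)).comp_ofReal).mul ((hφd i x hx).hasDerivAt)
    have hd0 : deriv (fun y : ℝ =>
        (P^e).eval (y:ℂ) * F y - ∑ i, (c i).eval (y:ℂ) * φ i y) x = 0 := by
      have hev : (fun y : ℝ => (P^e).eval (y:ℂ) * F y - ∑ i, (c i).eval (y:ℂ) * φ i y)
          =ᶠ[nhds x] (fun _ => 0) := Filter.eventuallyEq_of_mem (hs.mem_nhds hx) hH0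
      rw [hev.deriv_eq]; simp
    have h := hHd.deriv
    rw [hd0] at h
    linear_combination -h
  exact inSpan_pow_mul key (inSpan_sub
    (inSpan_sum Finset.univ _ (fun i _ =>
      inSpan_add (inSpan_smul (c i).derivative (inSpan_base i)) (inSpan_smul (c i) (hφ' i))))
    (inSpan_smul (P^e).derivative ⟨e, c, hc⟩))

theorem iter_inSpan (hs : IsOpen s) {f : ℝ → ℂ} (hf : ContDiffOn ℝ (⊤ : ℕ∞) f s)
    (N : ℕ) (p : ℕ → Polynomial ℂ)
    (hODE : ∀ x ∈ s, ∑ i ∈ range (N+1), (p i).eval (x:ℂ) * iteratedDeriv i f x = 0) :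
    ∀ k, InSpan s (p N) (fun i : Fin N => iteratedDeriv (i:ℕ) f) (iteratedDeriv k f) := by
  have htop : InSpan s (p N) (fun i : Fin N => iteratedDeriv (i:ℕ) f) (iteratedDeriv N f) := by
    refine ⟨1, fun j => -(p j), fun x hx => ?_⟩
    have h := hODE x hx
    rw [Finset.sum_range_succ] at h
    rw [pow_one, Fin.sum_univ_eq_sum_range (fun j => (-(p j)).eval (x:ℂ) * iteratedDeriv j f x) N]
    simp only [eval_neg, neg_mul]
    rw [Finset.sum_neg_distrib]
    exact eq_neg_of_add_eq_zero_right h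
  have hstep : ∀ (i : Fin N), InSpan s (p N) (fun i : Fin N => iteratedDeriv (i:ℕ) f)
      (deriv (iteratedDeriv (i:ℕ) f)) := by
    intro i
    rw [← iteratedDeriv_succ]
    rcases Nat.lt_or_ge ((i:ℕ)+1) N with h | h
    · exact inSpan_base (⟨(i:ℕ)+1, h⟩ : Fin N)
    · have heq : (i:ℕ)+1 = N := le_antisymm (Nat.succ_le_of_lt i.isLt) h
      rw [heq]; exact htop
  intro k
  induction k with
  | zero =>
    by_cases hN : 0 < N
    · exact inSpan_base (⟨0, hN⟩ : Fin N)
    · have hN0 : N = 0 := Nat.eq_zero_of_not_pos hN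
      subst hN0
      refine ⟨1, Fin.elim0, fun x hx => ?_⟩
      have h := hODE x hx
      rw [Finset.sum_range_one] at h
      simpa [pow_one] using h
  | succ k ih =>
    rw [iteratedDeriv_succ]
    exact inSpan_deriv hs (fun i x hx => diffAt_iter hs hf _ hx) hstep
      (fun x hx => diffAt_iter hs hf k hx) ih

set_option maxHeartbeats 1000000 in
set_option synthInstance.maxHeartbeats 400000 in
theorem prod_iter_inSpan (hs : IsOpen s) {f g : ℝ → ℂ}
    (hf : ContDiffOn ℝ (⊤ : ℕ∞) f s) (hg : ContDiffOn ℝ (⊤ : ℕ∞) g s) {N M : ℕ}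
    (hPf : ∀ k, InSpan s P (fun i : Fin N => iteratedDeriv (i:ℕ) f) (iteratedDeriv k f))
    (hQg : ∀ k, InSpan s Q (fun j : Fin M => iteratedDeriv (j:ℕ) g) (iteratedDeriv k g)) :
    ∀ k, InSpan s (P*Q)
      (fun p : Fin N × Fin M => fun x => iteratedDeriv (p.1:ℕ) f x * iteratedDeriv (p.2:ℕ) g x)
      (iteratedDeriv k (f*g)) := by
  have hmul : ∀ k l : ℕ, InSpan s (P*Q)
      (fun p : Fin N × Fin M => fun x => iteratedDeriv (p.1:ℕ) f x * iteratedDeriv (p.2:ℕ) g x)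
      (fun x => iteratedDeriv k f x * iteratedDeriv l g x) :=
    fun k l => inSpan_mul (hPf k) (hQg l)
  have hfg : ContDiffOn ℝ (⊤ : ℕ∞) (f * g) s := hf.mul hg
  intro k
  induction k with
  | zero =>
    refine inSpan_congr (fun x hx => ?_) (hmul 0 0)
    simp [iteratedDeriv_zero]
  | succ k ih =>
    rw [iteratedDeriv_succ]
    refine inSpan_deriv hs ?_ ?_ (fun x hx => diffAt_iter hs hfg k hx) ih
    · intro p x hx
      exact (diffAt_iter hs hf _ hx).mul (diffAt_iter hs hg _ hx)
    · intro p
      refine inSpan_congr (fun x hx => ?_) (inSpan_add (hmul ((p.1:ℕ)+1) (p.2:ℕ)) (hmul (p.1:ℕ) ((p.2:ℕ)+1)))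
      rw [deriv_fun_mul (diffAt_iter hs hf _ hx) (diffAt_iter hs hg _ hx)]
      simp [iteratedDeriv_succ]
theorem normalize_ODE {f : ℝ → ℂ} (n : ℕ) (p : Fin (n+1) → Polynomial ℂ) (hne : ∃ i, p i ≠ 0)
    (hODE : ∀ x ∈ s, ∑ i : Fin (n+1), (p i).eval (x:ℂ) * iteratedDeriv (i:ℕ) f x = 0) :
    ∃ N, N ≤ n ∧ ∃ q : ℕ → Polynomial ℂ, q N ≠ 0 ∧
      ∀ x ∈ s, ∑ i ∈ range (N+1), (q i).eval (x:ℂ) * iteratedDeriv i f x = 0 := by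
  classical
  set q : ℕ → Polynomial ℂ := fun i => if h : i < n+1 then p ⟨i, h⟩ else 0 with hqdef
  obtain ⟨i₀, hi₀⟩ := hne
  have hq0 : q (i₀ : ℕ) ≠ 0 := by
    rw [hqdef]
    simpa [dif_pos i₀.isLt, Fin.eta, Nat.lt_succ_iff.mp i₀.isLt] using hi₀
  have hT : ((range (n+1)).filter (fun i => q i ≠ 0)).Nonempty :=
    ⟨(i₀:ℕ), Finset.mem_filter.mpr ⟨Finset.mem_range.mpr i₀.isLt, hq0⟩⟩
  set N := Finset.max' _ hT with hNdef
  have hNmem := Finset.max'_mem _ hT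
  rw [Finset.mem_filter, Finset.mem_range] at hNmem
  refine ⟨N, Nat.lt_succ_iff.mp hNmem.1, q, hNmem.2, fun x hx => ?_⟩
  have h2 : ∑ i ∈ range (n+1), (q i).eval (x:ℂ) * iteratedDeriv i f x = 0 := by
    rw [← Fin.sum_univ_eq_sum_range (fun i => (q i).eval (x:ℂ) * iteratedDeriv i f x) (n+1)]
    rw [Finset.sum_congr rfl (fun (i : Fin (n+1)) _ => by
      rw [hqdef]
      simp only [dif_pos i.isLt, Fin.eta] : ∀ i ∈ Finset.univ, _ = (p i).eval (x:ℂ) * iteratedDeriv (i:ℕ) f x)]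
    exact hODE x hx
  rw [Finset.sum_subset (Finset.range_subset_range.mpr (Nat.succ_le_succ (Nat.lt_succ_iff.mp hNmem.1)))
    (fun i hi hni => ?_), h2]
  have hqi : q i = 0 := by
    by_contra hqi
    exact hni (Finset.mem_range.mpr (Nat.lt_succ_of_le
      (Finset.le_max' _ i (Finset.mem_filter.mpr ⟨hi, hqi⟩))))
  rw [hqi]; simp
end

set_option maxHeartbeats 1000000 in
set_option synthInstance.maxHeartbeats 400000 in
/-- If `f` satisfies a linear ODE of order `n` and `g` one of order `m`, both with rational
function coefficients, then `f · g` satisfies a linear ODE of order at most `n · m` with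
rational function coefficients. -/
theorem prod_satisfies_linear_ODE (a b : ℝ) (f g : ℝ → ℂ)
    (hf : ContDiffOn ℝ (⊤ : ℕ∞) f (Set.Ioo a b)) (hg : ContDiffOn ℝ (⊤ : ℕ∞) g (Set.Ioo a b))
    (n m : ℕ) (hfO : SatisfiesLinearODE f n (Set.Ioo a b))
    (hgO : SatisfiesLinearODE g m (Set.Ioo a b)) :
    SatisfiesLinearODE (f * g) (n * m) (Set.Ioo a b) := by
  classical
  set s := Set.Ioo a b with hsdef
  have hs : IsOpen s := isOpen_Ioo
  obtain ⟨pf, hpf, hODEf⟩ := hfO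
  obtain ⟨pg, hpg, hODEg⟩ := hgO
  obtain ⟨N, hNn, qf, hqfN, hODEf'⟩ := normalize_ODE n pf hpf hODEf
  obtain ⟨M, hMm, qg, hqgM, hODEg'⟩ := normalize_ODE m pg hpg hODEg
  set P := qf N with hP
  set Q := qg M with hQ
  have hspanf := iter_inSpan hs hf N qf hODEf'
  have hspang := iter_inSpan hs hg M qg hODEg'
  have hprod := prod_iter_inSpan hs hf hg hspanf hspang
  choose e c hec using fun k : Fin (N*M+1) => hprod (k : ℕ)
  set D : Fin (N*M+1) → Polynomial ℂ := fun k => (P*Q)^(e k) with hDdef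
  have hPQ : P * Q ≠ 0 := mul_ne_zero hqfN hqgM
  have hD : ∀ k, D k ≠ 0 := fun k => pow_ne_zero _ hPQ
  have hinj : Function.Injective (algebraMap (Polynomial ℂ) (RatFunc ℂ)) := IsFractionRing.injective _ _
  set v : Fin (N*M+1) → (Fin N × Fin M → (RatFunc ℂ)) :=
    fun k ij => algebraMap _ (RatFunc ℂ) (c k ij) / algebraMap _ (RatFunc ℂ) (D k) with hvdef
  have hnli : ¬ LinearIndependent (RatFunc ℂ) v := by
    intro hli
    have h1 := hli.fintype_card_le_finrank
    rw [Module.finrank_fintype_fun_eq_card] at h1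
    simp only [Fintype.card_fin, Fintype.card_prod] at h1
    omega
  obtain ⟨w, hw, k₀, hk₀⟩ := Fintype.not_linearIndependent_iff.mp hnli
  obtain ⟨bb, hbb⟩ := IsLocalization.exist_integer_multiples (nonZeroDivisors (Polynomial ℂ))
    Finset.univ (fun k : Fin (N*M+1) => w k / algebraMap _ (RatFunc ℂ) (D k))
  have hbb2 : ∀ k : Fin (N*M+1), ∃ r : Polynomial ℂ,
      algebraMap (Polynomial ℂ) (RatFunc ℂ) r = (bb : Polynomial ℂ) • (w k / algebraMap _ (RatFunc ℂ) (D k)) :=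
    fun k => hbb k (Finset.mem_univ k)
  choose u hu using hbb2
  have hwsum : ∀ ij : Fin N × Fin M, ∑ k, w k * v k ij = 0 := by
    intro ij
    have h1 := congrFun hw ij
    rw [Finset.sum_apply] at h1
    simp only [Pi.smul_apply, smul_eq_mul, Pi.zero_apply] at h1
    exact h1
  have hker : ∀ ij : Fin N × Fin M, ∑ k, u k * c k ij = 0 := by
    intro ij
    apply hinj
    rw [map_sum, map_zero]
    calc ∑ k, algebraMap (Polynomial ℂ) (RatFunc ℂ) (u k * c k ij)
        = ∑ k, ((bb : Polynomial ℂ) • (w k / algebraMap (Polynomial ℂ) (RatFunc ℂ) (D k)))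
          * algebraMap (Polynomial ℂ) (RatFunc ℂ) (c k ij) := by
          refine Finset.sum_congr rfl fun k _ => ?_
          rw [map_mul, hu k]
      _ = (bb : Polynomial ℂ) • ∑ k, w k * v k ij := by
          rw [Finset.smul_sum]
          refine Finset.sum_congr rfl fun k _ => ?_
          simp only [hvdef, Algebra.smul_def]
          ring
      _ = 0 := by rw [hwsum ij, smul_zero]
  have hbne : algebraMap (Polynomial ℂ) (RatFunc ℂ) (bb : Polynomial ℂ) ≠ 0 :=
    fun hh => nonZeroDivisors.coe_ne_zero bb (hinj (by rw [hh, map_zero]))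
  have hu0 : u k₀ ≠ 0 := by
    intro h0
    apply hk₀
    have h1 := hu k₀
    rw [h0, map_zero, Algebra.smul_def] at h1
    have hDne : algebraMap (Polynomial ℂ) (RatFunc ℂ) (D k₀) ≠ 0 :=
      fun hh => hD k₀ (hinj (by rw [hh, map_zero]))
    rcases mul_eq_zero.mp h1.symm with h | h
    · exact absurd h hbne
    · exact (div_eq_zero_iff.mp h).resolve_right hDne
  set A : ℕ → Polynomial ℂ := fun k => if h : k < N*M+1 then u ⟨k, h⟩ * D ⟨k, h⟩ else 0 with hAdef
  have hNMnm : N*M ≤ n*m := Nat.mul_le_mul hNn hMm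
  refine ⟨fun k : Fin (n*m+1) => A (k:ℕ), ⟨⟨(k₀:ℕ), by have := k₀.isLt; omega⟩, ?_⟩, ?_⟩
  · show A ((k₀:ℕ)) ≠ 0
    simp only [hAdef, dif_pos k₀.isLt, Fin.eta]
    exact mul_ne_zero hu0 (hD k₀)
  · intro x hx
    rw [Fin.sum_univ_eq_sum_range (fun k => (A k).eval (x:ℂ) * iteratedDeriv k (f*g) x) (n*m+1)]
    rw [← Finset.sum_subset (Finset.range_subset_range.mpr (by omega : N*M+1 ≤ n*m+1))
      (fun i _ hni => ?_)]
    · rw [← Fin.sum_univ_eq_sum_range (fun k => (A k).eval (x:ℂ) * iteratedDeriv k (f*g) x)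
        (N*M+1)]
      have hterm : ∀ k : Fin (N*M+1), (A (k:ℕ)).eval (x:ℂ) * iteratedDeriv (k:ℕ) (f*g) x
          = (u k).eval (x:ℂ) * ∑ ij : Fin N × Fin M, (c k ij).eval (x:ℂ) *
            (iteratedDeriv (ij.1:ℕ) f x * iteratedDeriv (ij.2:ℕ) g x) := by
        intro k
        have hrel := hec k x hx
        simp only [hAdef, dif_pos k.isLt, Fin.eta, eval_mul]
        rw [mul_assoc, hrel]
      calc ∑ k : Fin (N*M+1), (A (k:ℕ)).eval (x:ℂ) * iteratedDeriv (k:ℕ) (f*g) x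
          = ∑ k : Fin (N*M+1), ∑ ij : Fin N × Fin M, (u k).eval (x:ℂ) *
            ((c k ij).eval (x:ℂ) * (iteratedDeriv (ij.1:ℕ) f x * iteratedDeriv (ij.2:ℕ) g x)) := by
            refine Finset.sum_congr rfl fun k _ => ?_
            rw [hterm k, Finset.mul_sum]
        _ = ∑ ij : Fin N × Fin M, ∑ k : Fin (N*M+1), (u k).eval (x:ℂ) *
            ((c k ij).eval (x:ℂ) * (iteratedDeriv (ij.1:ℕ) f x * iteratedDeriv (ij.2:ℕ) g x)) :=
            Finset.sum_comm
        _ = 0 := by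
            refine Finset.sum_eq_zero fun ij _ => ?_
            have hz : ∑ k, (u k).eval (x:ℂ) * (c k ij).eval (x:ℂ) = 0 := by
              have h1 := congrArg (Polynomial.eval (x:ℂ)) (hker ij)
              simpa [Polynomial.eval_finset_sum, eval_mul] using h1
            calc ∑ k : Fin (N*M+1), (u k).eval (x:ℂ) * ((c k ij).eval (x:ℂ) *
                  (iteratedDeriv (ij.1:ℕ) f x * iteratedDeriv (ij.2:ℕ) g x))
                = (∑ k : Fin (N*M+1), (u k).eval (x:ℂ) * (c k ij).eval (x:ℂ)) *
                  (iteratedDeriv (ij.1:ℕ) f x * iteratedDeriv (ij.2:ℕ) g x) := by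
                  rw [Finset.sum_mul]
                  exact Finset.sum_congr rfl fun k _ => by ring
              _ = 0 := by rw [hz, zero_mul]
    · rw [Finset.mem_range] at hni
      simp only [hAdef, dif_neg hni, eval_zero, zero_mul]
end
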